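/- Let (R,≤),ρ be a causal realisation of a family of configurations F. Then ρ is extremal if and only if: (i) for every r ∈ R and every down-closed subset X of R with X ⊆ [r) and ρ(X ∪ {r}) ∈ F one has X = [r); and (ii) for all r, r' ∈ R, if [r) = [r') and ρ(r) = ρ(r') then r = r'. Here [r) denotes the set of strict predecessors of r. -/

import Mathlib

universe u v w

/-- The image of a set under a partial function. -/
def pimage {α : Type u} {β : Type v} (f : α → Option β) (x : Set α) : Set β :=
  {b | ∃ a ∈ x, f a = some b}

/-- A family of configurations over the set of events `A`:
a non-empty family of subsets, whose underlying set is all of `A`,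
closed under unions of finitely compatible subfamilies,
and satisfying the securing-chain condition. -/
structure ConfigFamily (A : Type u) where
  F : Set (Set A)
  nonempty : F.Nonempty
  covers : ∀ a : A, ∃ x ∈ F, a ∈ x
  unionClosed : ∀ X ⊆ F, (∀ Y ⊆ X, Y.Finite → ∃ z ∈ F, ∀ y ∈ Y, y ⊆ z) → ⋃₀ X ∈ F
  secured : ∀ x ∈ F, ∀ e ∈ x, ∃ l : List A, l ≠ [] ∧ l.getLast? = some e ∧
    (∀ a ∈ l, a ∈ x) ∧ ∀ i, 0 < i → i ≤ l.length → {a | a ∈ l.take i} ∈ F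

/-- A causal realisation of the family `C`: a partial order whose
principal lower sets are finite, together with a function to events
sending every down-closed subset to a configuration of the family. -/
structure Realisation {A : Type u} (C : ConfigFamily A) where
  carrier : Type u
  le : carrier → carrier → Prop
  le_refl : ∀ a, le a a
  le_trans : ∀ a b c, le a b → le b c → le a c
  le_antisymm : ∀ a b, le a b → le b a → a = b
  finPast : ∀ e, {e' | le e' e}.Finite
  ρ : carrier → A
  real : ∀ x : Set carrier, (∀ a ∈ x, ∀ b, le b a → b ∈ x) → ρ '' x ∈ C.F

namespace Realisation

variable {A : Type u} {C : ConfigFamily A}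

/-- Down-closed subsets of the carrier of a realisation. -/
def IsDown (r : Realisation C) (x : Set r.carrier) : Prop :=
  ∀ a ∈ x, ∀ b, r.le b a → b ∈ x

/-- The set `[a) = [a] \ {a}` of strict predecessors. -/
def spred (r : Realisation C) (a : r.carrier) : Set r.carrier :=
  {b | r.le b a ∧ b ≠ a}

/-- The carrier has a top element. -/
def HasTop (r : Realisation C) : Prop := ∃ t, ∀ a, r.le a t

end Realisation

/-- A map of realisations: a partial surjective function between the carriers,
preserving down-closed subsets and commuting with the functions to events. -/
structure RealMap {A : Type u} {C : ConfigFamily A} (r r' : Realisation C) where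
  f : r.carrier → Option r'.carrier
  surj : ∀ b, ∃ a, f a = some b
  presDown : ∀ x, r.IsDown x → r'.IsDown (pimage f x)
  commutes : ∀ a b, f a = some b → r.ρ a = r'.ρ b

namespace RealMap

variable {A : Type u} {C : ConfigFamily A} {r r' r₀ : Realisation C}

/-- The map is total. -/
def IsTotal (m : RealMap r r') : Prop := ∀ a, ∃ b, m.f a = some b

/-- The map is an isomorphism of realisations: it has an inverse map of
realisations, given by the inverse relation. -/
def IsIso (m : RealMap r r') : Prop :=
  ∃ m' : RealMap r' r, ∀ a b, m.f a = some b ↔ m'.f b = some a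

/-- `m : r → r₀` is a projection witnessed by `g`: `g` realises the carrier of
`r₀` as a subset of the carrier of `r` with the restricted order and restricted
function to events, and `m` is the inverse relation of this inclusion. -/
def IsProjectionVia (m : RealMap r r₀) (g : r₀.carrier → r.carrier) : Prop :=
  Function.Injective g ∧ (∀ a b, r₀.le a b ↔ r.le (g a) (g b)) ∧
    (∀ a, r₀.ρ a = r.ρ (g a)) ∧ (∀ a b, m.f a = some b ↔ g b = a)

/-- `m` is a projection. -/
def IsProjection (m : RealMap r r₀) : Prop := ∃ g, m.IsProjectionVia g

end RealMap

/-- A realisation is extremal when every total map of realisations from it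
is an isomorphism. -/
def Realisation.Extremal {A : Type u} {C : ConfigFamily A} (r : Realisation C) : Prop :=
  ∀ (r' : Realisation C) (m : RealMap r r'), m.IsTotal → m.IsIso

/-- A prime extremal realisation: extremal with a top element. -/
def Realisation.PrimeExtremal {A : Type u} {C : ConfigFamily A} (r : Realisation C) : Prop :=
  r.Extremal ∧ r.HasTop

/-- Isomorphism of realisations. -/
def RealIso {A : Type u} {C : ConfigFamily A} (r r' : Realisation C) : Prop :=
  ∃ m : RealMap r r', m.IsIso

/-- `m` is the composite of `m₁` followed by `m₂` (as partial functions). -/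
def CompEq {A : Type u} {C : ConfigFamily A} {r r' r'' : Realisation C}
    (m₁ : RealMap r r') (m₂ : RealMap r' r'') (m : RealMap r r'') : Prop :=
  ∀ a c, m.f a = some c ↔ ∃ b, m₁.f a = some b ∧ m₂.f b = some c

/-!
Each condition is necessary, since its failure yields a total map that is not an isomorphism:
cutting the strict past of `e` down to `X` keeps the identity a map of realisations, and two
events with the same strict past and the same label can be identified.

Conversely, a total map `g` is an isomorphism once it is injective and monotone. By well-founded
induction along the finite pasts, the `y < e` with `g y < g e` form a down-closed set which,
together with `e`, realises the configuration `ρ' [g e]`; the first condition makes it all of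
`[e)`, so `g` is strictly monotone. Then `g a = g b` forces `[a) = [b)`, again by induction, and
the second condition gives `a = b`.
-/

variable {A : Type u} {C : ConfigFamily A}

namespace ConfigFamily

theorem sUnion_mem_of_subset {X : Set (Set A)} {z : Set A} (hX : X ⊆ C.F)
    (hz : z ∈ C.F) (hXz : ∀ x ∈ X, x ⊆ z) : ⋃₀ X ∈ C.F :=
  C.unionClosed X hX fun _ hY _ => ⟨z, hz, fun y hy => hXz y (hY hy)⟩

theorem image_mem_of_principal {β : Type*} {le : β → β → Prop} (hrefl : ∀ a, le a a)
    {ρ : β → A} (hprincipal : ∀ a, ρ '' {b | le b a} ∈ C.F) {x : Set β}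
    (hx : ∀ a ∈ x, ∀ b, le b a → b ∈ x) {z : Set A} (hz : z ∈ C.F)
    (hxz : ρ '' x ⊆ z) :
    ρ '' x ∈ C.F := by
  have hx_eq : x = ⋃ a ∈ x, {b | le b a} := by
    ext b
    simp only [Set.mem_iUnion, exists_prop]
    exact ⟨fun hb => ⟨b, hb, hrefl b⟩, fun ⟨a, ha, hba⟩ => hx a ha b hba⟩
  have hsub : ∀ a ∈ x, ρ '' {b | le b a} ⊆ z := fun a ha =>
    (Set.image_mono fun b hb => hx a ha b hb).trans hxz
  rw [hx_eq, Set.image_iUnion₂, ← Set.sUnion_image]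
  refine C.sUnion_mem_of_subset ?_ hz ?_
  · rintro _ ⟨a, -, rfl⟩
    exact hprincipal a
  · rintro _ ⟨a, ha, rfl⟩
    exact hsub a ha

end ConfigFamily

namespace Realisation

variable (r : Realisation C)

theorem isDown_past (a : r.carrier) : r.IsDown {b | r.le b a} :=
  fun _ hb _ hcb => r.le_trans _ _ _ hcb hb

variable {r}

theorem mem_spred_of_le {a b c : r.carrier} (hcb : r.le c b) (hb : b ∈ r.spred a) :
    c ∈ r.spred a := by
  refine ⟨r.le_trans _ _ _ hcb hb.1, ?_⟩
  rintro rfl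
  exact hb.2 (r.le_antisymm _ _ hb.1 hcb)

theorem eq_or_mem_spred_of_le {a b : r.carrier} (h : r.le b a) : b = a ∨ b ∈ r.spred a :=
  (eq_or_ne b a).imp_right fun hne => ⟨h, hne⟩

theorem wellFounded_spred : WellFounded fun b a : r.carrier => b ∈ r.spred a := by
  refine Subrelation.wf (fun {b a} h => ?_) (measure fun a => {b | r.le b a}.ncard).wf
  have hsub : {c | r.le c b} ⊆ {c | r.le c a} := fun c hc => r.le_trans _ _ _ hc h.1
  refine Set.ncard_lt_ncard ((Set.ssubset_iff_of_subset hsub).2 ⟨a, r.le_refl a, ?_⟩)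
    (r.finPast a)
  exact fun hab => h.2 (r.le_antisymm _ _ h.1 hab)

theorem le_map_of_mem_spred {r' : Realisation C} {g : r.carrier → r'.carrier}
    (hstrict : ∀ a b, b ∈ r.spred a → g b ∈ r'.spred (g a)) {a b : r.carrier}
    (h : r.le a b) : r'.le (g a) (g b) :=
  (r.eq_or_mem_spred_of_le h).elim (fun h => h ▸ r'.le_refl _) fun h => (hstrict b a h).1

end Realisation

namespace RealMap

variable {r r' : Realisation C}

/-- The lifting property `hlift` is what makes images of down-closed sets down-closed. -/
def ofFun (g : r.carrier → r'.carrier) (hsurj : Function.Surjective g)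
    (hlift : ∀ a v, r'.le v (g a) → ∃ b, r.le b a ∧ g b = v)
    (hρ : ∀ a, r.ρ a = r'.ρ (g a)) : RealMap r r' where
  f a := some (g a)
  surj v := (hsurj v).imp fun _ h => congrArg some h
  presDown x hx := by
    rintro _ ⟨a, ha, h⟩ v hv
    cases h
    obtain ⟨b, hba, rfl⟩ := hlift a v hv
    exact ⟨b, hx a ha b hba, rfl⟩
  commutes a _ h := by
    cases h
    exact hρ a

variable {m : RealMap r r'} {g : r.carrier → r'.carrier}

theorem surjective_of_eq_some (hg : ∀ a, m.f a = some (g a)) : Function.Surjective g := by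
  intro v
  obtain ⟨a, ha⟩ := m.surj v
  exact ⟨a, Option.some_injective _ ((hg a).symm.trans ha)⟩

theorem ρ_eq_of_eq_some (hg : ∀ a, m.f a = some (g a)) (a : r.carrier) :
    r.ρ a = r'.ρ (g a) :=
  m.commutes a (g a) (hg a)

theorem exists_le_of_eq_some (hg : ∀ a, m.f a = some (g a)) {a : r.carrier}
    {v : r'.carrier} (hv : r'.le v (g a)) : ∃ b, r.le b a ∧ g b = v := by
  obtain ⟨b, hba, hb⟩ := m.presDown _ (r.isDown_past a) (g a) ⟨a, r.le_refl a, hg a⟩ v hv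
  exact ⟨b, hba, Option.some_injective _ ((hg b).symm.trans hb)⟩

theorem exists_mem_spred_of_eq_some (hg : ∀ a, m.f a = some (g a)) {a : r.carrier}
    {v : r'.carrier} (hv : v ∈ r'.spred (g a)) : ∃ b ∈ r.spred a, g b = v := by
  obtain ⟨b, hba, rfl⟩ := exists_le_of_eq_some hg hv.1
  exact ⟨b, ⟨hba, fun hb => hv.2 (congrArg g hb)⟩, rfl⟩

theorem isIso_iff_of_eq_some (hg : ∀ a, m.f a = some (g a)) :
    m.IsIso ↔ Function.Injective g ∧ ∀ a b, r.le a b → r'.le (g a) (g b) := by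
  constructor
  · rintro ⟨m', hm'⟩
    have hinv : ∀ a, m'.f (g a) = some a := fun a => (hm' a (g a)).1 (hg a)
    refine ⟨fun a b hab => Option.some_injective _ ((hinv a).symm.trans (hab ▸ hinv b)), ?_⟩
    intro a b hab
    obtain ⟨v, hv, hva⟩ :=
      m'.presDown _ (r'.isDown_past (g b)) b ⟨g b, r'.le_refl _, hinv b⟩ a hab
    rwa [← Option.some_injective _ ((hg a).symm.trans ((hm' a v).2 hva))] at hv
  · rintro ⟨hinj, hmono⟩
    have hbij : Function.Bijective g := ⟨hinj, surjective_of_eq_some hg⟩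
    let e := Equiv.ofBijective g hbij
    have hge : ∀ v, g (e.symm v) = v := Equiv.ofBijective_apply_symm_apply g hbij
    refine ⟨ofFun e.symm e.symm.surjective (fun v a hav => ⟨g a, ?_, e.symm_apply_apply a⟩)
      (fun v => ?_), fun a v => ?_⟩
    · simpa only [hge] using hmono _ _ hav
    · rw [ρ_eq_of_eq_some hg, hge]
    · rw [hg, ofFun, Option.some_inj, Option.some_inj, e.symm_apply_eq]
      exact eq_comm

end RealMap

namespace Realisation

variable (r : Realisation C)

/-- The realisation `r` in which the strict past of `e` is cut down to `X`. -/
def restrictPast (e : r.carrier) (X : Set r.carrier) (hXd : r.IsDown X) (hXs : X ⊆ r.spred e)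
    (hXF : r.ρ '' (X ∪ {e}) ∈ C.F) : Realisation C where
  carrier := r.carrier
  le a b := r.le a b ∧ (b = e → a ∈ X ∪ {e})
  le_refl a := ⟨r.le_refl a, fun h => Or.inr h⟩
  le_trans a b c hab hbc := by
    refine ⟨r.le_trans a b c hab.1 hbc.1, fun hc => ?_⟩
    rcases hbc.2 hc with hb | hb
    · exact Or.inl (hXd b hb a hab.1)
    · exact hab.2 hb
  le_antisymm a b hab hba := r.le_antisymm a b hab.1 hba.1
  finPast a := (r.finPast a).subset fun _ h => h.1
  ρ := r.ρ
  real x hx := by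
    have hclosure : r.IsDown {a | ∃ b ∈ x, r.le a b} := fun a ⟨b, hb, hab⟩ c hca =>
      ⟨b, hb, r.le_trans c a b hca hab⟩
    refine ConfigFamily.image_mem_of_principal (fun a => ⟨r.le_refl a, fun h => Or.inr h⟩)
      (fun a => ?_) hx (r.real _ hclosure) (Set.image_mono fun a ha => ⟨a, ha, r.le_refl a⟩)
    by_cases ha : a = e
    · subst ha
      convert hXF using 2
      ext b
      refine ⟨fun hb => hb.2 rfl, fun hb => ⟨?_, fun _ => hb⟩⟩
      rcases hb with hb | rfl
      exacts [(hXs hb).1, r.le_refl _]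
    · convert r.real _ (r.isDown_past a) using 2
      exact Set.ext fun b => and_iff_left fun h => absurd h ha

variable {r}

theorem Extremal.eq_spred_of_isDown (hr : r.Extremal) {e : r.carrier} {X : Set r.carrier}
    (hXd : r.IsDown X) (hXs : X ⊆ r.spred e) (hXF : r.ρ '' (X ∪ {e}) ∈ C.F) :
    X = r.spred e := by
  let r' := r.restrictPast e X hXd hXs hXF
  let m : RealMap r r' := RealMap.ofFun (r' := r') (fun a => a) Function.surjective_id
    (fun _ b hb => ⟨b, hb.1, rfl⟩) fun _ => rfl
  have hmono := ((RealMap.isIso_iff_of_eq_some (m := m) fun _ => rfl).1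
    (hr r' m fun a => ⟨a, rfl⟩)).2
  exact hXs.antisymm fun b hb => ((hmono b e hb.1).2 rfl).resolve_right hb.2

variable {a b : r.carrier}

theorem le_of_spred_eq (hsp : r.spred a = r.spred b) {c : r.carrier} (hca : r.le c a)
    (hne : c ≠ a) : r.le c b :=
  (hsp.subset ⟨hca, hne⟩).1

theorem not_le_of_spred_eq (hab : a ≠ b) (hsp : r.spred a = r.spred b) : ¬r.le b a :=
  fun hba => (hsp.subset ⟨hba, hab.symm⟩).2 rfl

variable (r a b) in
def mergeLE (c d : {c : r.carrier // c ≠ b}) : Prop :=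
  r.le c d ∨ (c.1 = a ∧ r.le b d)

open Classical in
variable (r) in
noncomputable def mergeMap (hab : a ≠ b) (c : r.carrier) : {c : r.carrier // c ≠ b} :=
  if h : c = b then ⟨a, hab⟩ else ⟨c, h⟩

variable (hab : a ≠ b)

theorem mergeMap_self : r.mergeMap hab b = ⟨a, hab⟩ := dif_pos rfl

theorem mergeMap_of_ne {c : r.carrier} (h : c ≠ b) : r.mergeMap hab c = ⟨c, h⟩ := dif_neg h

theorem mergeMap_val (c : {c : r.carrier // c ≠ b}) : r.mergeMap hab c.1 = c := dif_neg c.2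

theorem mergeMap_surjective : Function.Surjective (r.mergeMap hab) :=
  fun c => ⟨c, mergeMap_val hab c⟩

theorem ρ_mergeMap_val (hρ : r.ρ a = r.ρ b) (c : r.carrier) :
    r.ρ (r.mergeMap hab c).1 = r.ρ c := by
  by_cases h : c = b
  · rw [h, mergeMap_self, hρ]
  · rw [mergeMap_of_ne hab h]

theorem mergeLE_mergeMap (hsp : r.spred a = r.spred b) {c d : r.carrier} (h : r.le c d) :
    r.mergeLE a b (r.mergeMap hab c) (r.mergeMap hab d) := by
  by_cases hc : c = b <;> by_cases hd : d = b
  · rw [hc, hd, mergeMap_self]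
    exact Or.inl (r.le_refl a)
  · rw [hc, mergeMap_self, mergeMap_of_ne hab hd]
    exact Or.inr ⟨rfl, hc ▸ h⟩
  · rw [hd, mergeMap_self, mergeMap_of_ne hab hc]
    exact Or.inl (le_of_spred_eq hsp.symm (hd ▸ h) hc)
  · rw [mergeMap_of_ne hab hc, mergeMap_of_ne hab hd]
    exact Or.inl h

theorem exists_le_mergeMap_eq (hsp : r.spred a = r.spred b) {d : r.carrier}
    {w : {c : r.carrier // c ≠ b}} (h : r.mergeLE a b w (r.mergeMap hab d)) :
    ∃ c, r.le c d ∧ r.mergeMap hab c = w := by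
  rcases h with h | ⟨hw, hbd⟩
  · by_cases hd : d = b
    · subst hd
      rw [mergeMap_self] at h
      by_cases hwa : w.1 = a
      · exact ⟨d, r.le_refl d, (mergeMap_self hab).trans (Subtype.ext hwa.symm)⟩
      · exact ⟨w, le_of_spred_eq hsp h hwa, mergeMap_val hab w⟩
    · rw [mergeMap_of_ne hab hd] at h
      exact ⟨w, h, mergeMap_val hab w⟩
  · refine ⟨b, ?_, (mergeMap_self hab).trans (Subtype.ext hw.symm)⟩
    by_cases hd : d = b
    · exact hd ▸ r.le_refl b
    · rwa [mergeMap_of_ne hab hd] at hbd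

/-- The realisation obtained from `r` by identifying `b` with `a`. -/
def merge (hsp : r.spred a = r.spred b) (hρ : r.ρ a = r.ρ b) : Realisation C where
  carrier := {c : r.carrier // c ≠ b}
  le := r.mergeLE a b
  le_refl c := Or.inl (r.le_refl c)
  le_trans c d e hcd hde := by
    rcases hcd with hcd | ⟨hc, hbd⟩ <;> rcases hde with hde | ⟨hd, hbe⟩
    · exact Or.inl (r.le_trans _ _ _ hcd hde)
    · by_cases hca : c.1 = a
      · exact Or.inr ⟨hca, hbe⟩
      · exact Or.inl (r.le_trans _ _ _ (le_of_spred_eq hsp (hd ▸ hcd) hca) hbe)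
    · exact Or.inr ⟨hc, r.le_trans _ _ _ hbd hde⟩
    · exact Or.inr ⟨hc, hbe⟩
  le_antisymm c d hcd hdc := by
    rcases hcd with hcd | ⟨hc, hbd⟩ <;> rcases hdc with hdc | ⟨hd, hbc⟩
    · exact Subtype.ext (r.le_antisymm _ _ hcd hdc)
    · exact absurd (hd ▸ r.le_trans _ _ _ hbc hcd) (not_le_of_spred_eq hab hsp)
    · exact absurd (hc ▸ r.le_trans _ _ _ hbd hdc) (not_le_of_spred_eq hab hsp)
    · exact Subtype.ext (hc.trans hd.symm)
  finPast d := by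
    refine (((r.finPast d).union (Set.finite_singleton a)).preimage
      Subtype.val_injective.injOn).subset ?_
    rintro c (h | ⟨h, -⟩)
    exacts [Or.inl h, Or.inr h]
  ρ c := r.ρ c
  real x hx := by
    have hdown : r.IsDown (r.mergeMap hab ⁻¹' x) := fun c hc d hdc =>
      hx _ hc _ (mergeLE_mergeMap hab hsp hdc)
    convert r.real _ hdown using 1
    conv_lhs => rw [← Set.image_preimage_eq x (mergeMap_surjective hab), Set.image_image]
    exact Set.image_congr fun c _ => ρ_mergeMap_val hab hρ c

theorem Extremal.eq_of_spred_eq (hr : r.Extremal) (hsp : r.spred a = r.spred b)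
    (hρ : r.ρ a = r.ρ b) : a = b := by
  by_contra hab
  let m : RealMap r (r.merge hab hsp hρ) := RealMap.ofFun (r.mergeMap hab)
    (mergeMap_surjective hab) (fun _ _ h => exists_le_mergeMap_eq hab hsp h)
    fun c => (ρ_mergeMap_val hab hρ c).symm
  have hinj := ((RealMap.isIso_iff_of_eq_some (m := m) fun _ => rfl).1
    (hr _ m fun _ => ⟨_, rfl⟩)).1
  exact hab (hinj ((mergeMap_of_ne hab hab).trans (mergeMap_self hab).symm))

end Realisation

namespace RealMap

variable {r r' : Realisation C} {m : RealMap r r'} {g : r.carrier → r'.carrier}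

theorem mem_spred_of_eq_some (hcut : ∀ (e : r.carrier) (X : Set r.carrier), r.IsDown X →
      X ⊆ r.spred e → r.ρ '' (X ∪ {e}) ∈ C.F → X = r.spred e)
    (hg : ∀ a, m.f a = some (g a)) (a : r.carrier) :
    ∀ b ∈ r.spred a, g b ∈ r'.spred (g a) := by
  induction a using r.wellFounded_spred.induction with | _ a ih
  have hmono : ∀ y ∈ r.spred a, ∀ z, r.le z y → r'.le (g z) (g y) := fun y hy z hzy =>
    (r.eq_or_mem_spred_of_le hzy).elim (fun h => h ▸ r'.le_refl _) fun h => (ih y hy z h).1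
  let X := {y ∈ r.spred a | g y ∈ r'.spred (g a)}
  have hXd : r.IsDown X := fun y hy z hzy =>
    ⟨Realisation.mem_spred_of_le hzy hy.1,
      Realisation.mem_spred_of_le (hmono y hy.1 z hzy) hy.2⟩
  have hXF : r.ρ '' (X ∪ {a}) = r'.ρ '' {v | r'.le v (g a)} := by
    apply Set.Subset.antisymm
    · rintro _ ⟨y, hy | rfl, rfl⟩
      · exact ⟨g y, hy.2.1, (ρ_eq_of_eq_some hg y).symm⟩
      · exact ⟨g y, r'.le_refl _, (ρ_eq_of_eq_some hg y).symm⟩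
    · rintro _ ⟨v, hv, rfl⟩
      obtain ⟨y, hya, rfl⟩ := exists_le_of_eq_some hg hv
      rcases r'.eq_or_mem_spred_of_le hv with hgy | hgy
      · exact ⟨a, Or.inr rfl, by rw [hgy, ρ_eq_of_eq_some hg]⟩
      · refine ⟨y, Or.inl ⟨⟨hya, ?_⟩, hgy⟩, ρ_eq_of_eq_some hg y⟩
        rintro rfl
        exact hgy.2 rfl
  have hX : X = r.spred a :=
    hcut a X hXd (Set.sep_subset _ _) (hXF ▸ r'.real _ (r'.isDown_past _))
  intro b hb
  exact (hX ▸ hb : b ∈ X).2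

theorem injective_of_eq_some (hsep : ∀ a b, r.spred a = r.spred b → r.ρ a = r.ρ b → a = b)
    (hg : ∀ a, m.f a = some (g a))
    (hstrict : ∀ a b, b ∈ r.spred a → g b ∈ r'.spred (g a)) :
    Function.Injective g := by
  intro a
  induction a using r.wellFounded_spred.induction with | _ a ih
  refine fun b hab => hsep a b ?_ ?_
  · ext y
    constructor
    · intro hy
      obtain ⟨z, hz, hzy⟩ := exists_mem_spred_of_eq_some hg (hab ▸ hstrict a y hy)
      rwa [← ih y hy hzy.symm] at hz
    · intro hy
      obtain ⟨z, hz, hzy⟩ := exists_mem_spred_of_eq_some hg (hab.symm ▸ hstrict b y hy)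
      rwa [ih z hz hzy] at hz
  · rw [ρ_eq_of_eq_some hg, ρ_eq_of_eq_some hg, hab]

end RealMap

/-- Characterisation of extremal realisations. -/
theorem stmt7 {A : Type u} (C : ConfigFamily A) (r : Realisation C) :
    r.Extremal ↔
      ((∀ (e : r.carrier) (X : Set r.carrier), r.IsDown X → X ⊆ r.spred e →
          r.ρ '' (X ∪ {e}) ∈ C.F → X = r.spred e) ∧
       (∀ a b, r.spred a = r.spred b → r.ρ a = r.ρ b → a = b)) := by
  refine ⟨fun hr => ⟨fun _ _ => hr.eq_spred_of_isDown, fun _ _ => hr.eq_of_spred_eq⟩,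
    fun ⟨hcut, hsep⟩ r' m hm => ?_⟩
  choose g hg using hm
  have hstrict := RealMap.mem_spred_of_eq_some hcut hg
  exact (RealMap.isIso_iff_of_eq_some hg).2
    ⟨RealMap.injective_of_eq_some hsep hg hstrict, fun _ _ => r.le_map_of_mem_spred hstrict⟩
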